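/- arXiv:0901.2588 — 6 statements merged into one kernel-verified Lean document; each statement's English description precedes it below -/
import Mathlib

section
/- Let K ≥ 1 and M be integers with M ≥ 2K, and let r ∈ [0, 1/2]. Then the static time allocation a = 1/2 satisfies the balancing condition of Theorem 1, namely d^MAC-sym_{2K,1,M}(r/(1/2)) = d^MAC-sym_{K,1,M}(r/(1 − 1/2)), and the common value equals the converse bound: d^MAC-sym_{2K,1,M}(2r) = d^MAC-sym_{K,1,M}(2r) = M(1 − 2r) = M(1 − 2r)^+. (This is the matching of the lower and upper bounds in Theorem 1 when the relay has at least 2K antennas.) -/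
/-!
Both curves are evaluated on `[0, 1]` with single-antenna users. If `s ≤ M/(N+1)`, the curve
`d^MAC-sym_{N,1,M}(s)` is the point-to-point curve `d_{1,M}(s) = M(1 - s)`. Otherwise
`M/(N+1) < s ≤ 1` forces `M = N`, and `Ns` lies on the last segment `[N-1, N]` of `d_{N,N}`,
where that curve is `N - Ns`, again `M(1 - s)`. Thus `d^MAC-sym_{N,1,M}(s) = M(1 - s)` as soon
as `N ≤ M`, which for `s = 2r` and `N = K, 2K` is the theorem.
-/

/-- The Zheng–Tse point-to-point DMT curve for `m` transmit and `n` receive antennas: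
piecewise-linear interpolation of the points `(k, (m-k)(n-k))`, extended by `0`
for `r ≥ min m n`. -/
noncomputable def dPPC (m n : ℕ) (r : ℝ) : ℝ :=
  if min (m : ℝ) (n : ℝ) ≤ r then 0
  else ((m : ℝ) - (⌊r⌋ : ℝ)) * ((n : ℝ) - (⌊r⌋ : ℝ))
    - (r - (⌊r⌋ : ℝ)) * ((m : ℝ) + (n : ℝ) - 2 * (⌊r⌋ : ℝ) - 1)

/-- The symmetric-MAC DMT curve for `N` users, each with `m` antennas, and an
`n`-antenna receiver. -/
noncomputable def dMACsym (N m n : ℕ) (r : ℝ) : ℝ :=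
  if r ≤ min (m : ℝ) ((n : ℝ) / ((N : ℝ) + 1)) then dPPC m n r
  else dPPC (N * m) n ((N : ℝ) * r)

lemma dPPC_one_left (M : ℕ) {s : ℝ} (hs0 : 0 ≤ s) (hs1 : s ≤ 1) :
    dPPC 1 M s = M * (1 - s) := by
  rcases Nat.eq_zero_or_pos M with rfl | hM
  · rw [dPPC, if_pos (by simpa using hs0)]
    simp
  rcases hs1.lt_or_eq with hs1 | rfl
  · have hmin : ¬ min ((1 : ℕ) : ℝ) M ≤ s := by
      simpa using ⟨hs1, hs1.trans_le (by exact_mod_cast hM)⟩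
    rw [dPPC, if_neg hmin, Int.floor_eq_zero_iff.mpr ⟨hs0, hs1⟩]
    push_cast
    ring
  · rw [dPPC, if_pos (by simp)]
    ring

lemma dPPC_self_of_sub_one_le (n : ℕ) {t : ℝ} (h1 : (n : ℝ) - 1 ≤ t) (h2 : t ≤ n) :
    dPPC n n t = n - t := by
  rcases h2.lt_or_eq with h2 | rfl
  · have hfloor : ⌊t⌋ = (n : ℤ) - 1 := by
      rw [Int.floor_eq_iff]
      push_cast
      constructor <;> linarith
    rw [dPPC, if_neg (by simpa using h2), hfloor]
    push_cast
    ring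
  · rw [dPPC, if_pos (min_le_left _ _), sub_self]

lemma dMACsym_one_of_le {N M : ℕ} (hNM : N ≤ M) {s : ℝ} (hs0 : 0 ≤ s) (hs1 : s ≤ 1) :
    dMACsym N 1 M s = M * (1 - s) := by
  unfold dMACsym
  split_ifs with hs
  · exact dPPC_one_left M hs0 hs1
  have hpos : (0 : ℝ) < N + 1 := by positivity
  have hlt : (M : ℝ) < (N + 1) * s := by
    rw [← div_lt_iff₀' hpos]
    simpa [hs1] using hs
  obtain rfl : M = N := by
    have : (M : ℝ) < N + 1 := by nlinarith
    have : M < N + 1 := by exact_mod_cast this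
    omega
  rw [Nat.mul_one, dPPC_self_of_sub_one_le M (by nlinarith) (by nlinarith)]
  ring

theorem stmt0_general (K M : ℕ) (hM : 2 * K ≤ M) (r : ℝ)
    (hr0 : 0 ≤ r) (hr1 : r ≤ 1 / 2) :
    dMACsym (2 * K) 1 M (r / (1 / 2)) = dMACsym K 1 M (r / (1 - 1 / 2)) ∧
    dMACsym (2 * K) 1 M (2 * r) = (M : ℝ) * (1 - 2 * r) ∧
    dMACsym K 1 M (2 * r) = (M : ℝ) * (1 - 2 * r) ∧
    (M : ℝ) * (1 - 2 * r) = max ((M : ℝ) * (1 - 2 * r)) 0 := by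
  have h2r0 : 0 ≤ 2 * r := by linarith
  have h2r1 : 2 * r ≤ 1 := by linarith
  have h2K := dMACsym_one_of_le hM h2r0 h2r1
  have hK := dMACsym_one_of_le (by omega : K ≤ M) h2r0 h2r1
  refine ⟨?_, h2K, hK, ?_⟩
  · rw [show r / (1 / 2) = 2 * r by ring, show r / (1 - 1 / 2) = 2 * r by ring, h2K, hK]
  · exact (max_eq_left (mul_nonneg (Nat.cast_nonneg M) (by linarith))).symm

/-- for `K ≥ 1`, `M ≥ 2K` and `r ∈ [0, 1/2]`, the static time allocation
`a = 1/2` balances the two phases of the DF-MAC-BC scheme,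
`d^MAC-sym_{2K,1,M}(r/(1/2)) = d^MAC-sym_{K,1,M}(r/(1-1/2))`, and the common value
equals the converse bound `M(1-2r) = M(1-2r)⁺`. -/
theorem stmt0 (K M : ℕ) (hK : 1 ≤ K) (hM : 2 * K ≤ M) (r : ℝ)
    (hr0 : 0 ≤ r) (hr1 : r ≤ 1 / 2) :
    dMACsym (2 * K) 1 M (r / (1 / 2)) = dMACsym K 1 M (r / (1 - 1 / 2)) ∧
    dMACsym (2 * K) 1 M (2 * r) = (M : ℝ) * (1 - 2 * r) ∧
    dMACsym K 1 M (2 * r) = (M : ℝ) * (1 - 2 * r) ∧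
    (M : ℝ) * (1 - 2 * r) = max ((M : ℝ) * (1 - 2 * r)) 0 :=
  stmt0_general K M hM r hr0 hr1
end

section
/- Let M be a positive integer and let X be a nonnegative random variable whose law is Gamma(M, 1). For every r with 0 < r < 1/2, lim_{ρ→∞} log P( log(1 + ρX) < 2r log ρ ) / log ρ = −M(1 − 2r). (This is the high-SNR outage probability exponent computation which establishes the converse bound d(r) ≤ M(1 − 2r)^+ of Theorem 1 for the scalar-user reciprocal MIMO switch channel, since the end-to-end mutual information with optimal time allocation a = 1/2 equals half of log(1 + ρ‖H‖²) and ‖H‖² for an M-dimensional i.i.d. standard complex Gaussian vector H has law Gamma(M,1).) -/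
/-!
With `τ ρ = (ρ ^ (2r) - 1) / ρ ≈ ρ ^ (2r - 1) → 0`, the outage event is `X < τ ρ`, of
probability `F (τ ρ)` for the `Gamma(M, 1)` CDF `F`. Bounding `e^{-x}` by `e^{-t}` and `1`
inside the density gives `e^{-t} t^M / Γ(M + 1) ≤ F t ≤ t^M / Γ(M + 1)`, so
`log F (τ ρ) = M log (τ ρ) + O(1) = M (2r - 1) log ρ + o(log ρ)`.
-/

open MeasureTheory ProbabilityTheory Filter Set Real Topology

namespace ProbabilityTheory

variable {a r : ℝ}

lemma integrable_gammaPDFReal (ha : 0 < a) (hr : 0 < r) : Integrable (gammaPDFReal a r) := by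
  have hfinite : ∫⁻ x, gammaPDF a r x ≠ ⊤ := by simp [lintegral_gammaPDF_eq_one ha hr]
  refine (integrable_toReal_of_lintegral_ne_top
    (measurable_gammaPDFReal a r).ennreal_ofReal.aemeasurable hfinite).congr
    (ae_of_all _ fun x => ?_)
  exact ENNReal.toReal_ofReal (gammaPDFReal_nonneg ha hr x)

lemma gammaMeasure_Iio_toReal (ha : 0 < a) (hr : 0 < r) (t : ℝ) :
    (gammaMeasure a r (Iio t)).toReal = cdf (gammaMeasure a r) t := by
  rw [cdf_gammaMeasure_eq_lintegral ha hr, gammaMeasure, withDensity_apply _ measurableSet_Iio,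
    setLIntegral_congr Iio_ae_eq_Iic]

lemma cdf_gammaMeasure_eq_intervalIntegral (ha : 0 < a) (hr : 0 < r) (t : ℝ) :
    cdf (gammaMeasure a r) t = ∫ x in 0..t, gammaPDFReal a r x := by
  have hzero : cdf (gammaMeasure a r) 0 = 0 := by
    rw [← gammaMeasure_Iio_toReal ha hr, gammaMeasure, withDensity_apply _ measurableSet_Iio,
      lintegral_gammaPDF_of_nonpos le_rfl, ENNReal.toReal_zero]
  rw [← intervalIntegral.integral_Iic_sub_Iic (integrable_gammaPDFReal ha hr).integrableOn
    (integrable_gammaPDFReal ha hr).integrableOn, ← cdf_gammaMeasure_eq_integral ha hr,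
    ← cdf_gammaMeasure_eq_integral ha hr, hzero, sub_zero]

lemma gammaPDFReal_of_nonneg {x : ℝ} (hx : 0 ≤ x) :
    gammaPDFReal a r x = r ^ a / Gamma a * x ^ (a - 1) * exp (-(r * x)) := if_pos hx

lemma integral_gammaPDFReal_majorant (ha : 0 < a) (hr : 0 ≤ r) {t : ℝ} (ht : 0 ≤ t) :
    ∫ x in 0..t, r ^ a / Gamma a * x ^ (a - 1) = (r * t) ^ a / Gamma (a + 1) := by
  have hG : Gamma (a + 1) = a * Gamma a := Gamma_add_one ha.ne'
  rw [intervalIntegral.integral_const_mul, integral_rpow (Or.inl (by linarith)),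
    sub_add_cancel, zero_rpow ha.ne', mul_rpow hr ht, hG]
  field_simp
  ring

lemma cdf_gammaMeasure_le (ha : 0 < a) (hr : 0 < r) {t : ℝ} (ht : 0 ≤ t) :
    cdf (gammaMeasure a r) t ≤ (r * t) ^ a / Gamma (a + 1) := by
  rw [cdf_gammaMeasure_eq_intervalIntegral ha hr, ← integral_gammaPDFReal_majorant ha hr.le ht]
  refine intervalIntegral.integral_mono_on ht (integrable_gammaPDFReal ha hr).intervalIntegrable
    ((intervalIntegral.intervalIntegrable_rpow' (by linarith)).const_mul _) fun x hx => ?_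
  obtain ⟨hx0, -⟩ := hx
  rw [gammaPDFReal_of_nonneg hx0]
  have : 0 ≤ r ^ a / Gamma a * x ^ (a - 1) := by have := Gamma_pos_of_pos ha; positivity
  exact mul_le_of_le_one_right this (exp_le_one_iff.mpr (neg_nonpos.mpr (by positivity)))

lemma exp_neg_mul_le_cdf_gammaMeasure (ha : 0 < a) (hr : 0 < r) {t : ℝ} (ht : 0 ≤ t) :
    exp (-(r * t)) * ((r * t) ^ a / Gamma (a + 1)) ≤ cdf (gammaMeasure a r) t := by
  rw [cdf_gammaMeasure_eq_intervalIntegral ha hr, ← integral_gammaPDFReal_majorant ha hr.le ht,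
    ← intervalIntegral.integral_const_mul]
  refine intervalIntegral.integral_mono_on ht
    (((intervalIntegral.intervalIntegrable_rpow' (by linarith)).const_mul _).const_mul _)
    (integrable_gammaPDFReal ha hr).intervalIntegrable fun x hx => ?_
  obtain ⟨hx0, hxt⟩ := hx
  rw [gammaPDFReal_of_nonneg hx0, mul_comm]
  have : 0 ≤ r ^ a / Gamma a * x ^ (a - 1) := by have := Gamma_pos_of_pos ha; positivity
  exact mul_le_mul_of_nonneg_left
    (exp_le_exp.mpr (neg_le_neg (mul_le_mul_of_nonneg_left hxt hr.le))) this

lemma tendsto_log_cdf_gammaMeasure_sub_mul_log (ha : 0 < a) (hr : 0 < r) :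
    Tendsto (fun t => log (cdf (gammaMeasure a r) t) - a * log t) (𝓝[>] 0)
      (𝓝 (a * log r - log (Gamma (a + 1)))) := by
  set c := a * log r - log (Gamma (a + 1))
  have hbounds : ∀ t > 0, c - r * t ≤ log (cdf (gammaMeasure a r) t) - a * log t ∧
      log (cdf (gammaMeasure a r) t) - a * log t ≤ c := by
    intro t ht
    have hmajorant_pos : 0 < (r * t) ^ a / Gamma (a + 1) := by
      have := Gamma_pos_of_pos (show 0 < a + 1 by linarith); positivity
    have hlog_majorant : log ((r * t) ^ a / Gamma (a + 1)) = c + a * log t := by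
      rw [log_div (by positivity) (Gamma_pos_of_pos (by linarith)).ne',
        log_rpow (by positivity), log_mul hr.ne' ht.ne']
      ring
    have hminorant_pos := mul_pos (exp_pos (-(r * t))) hmajorant_pos
    have hlower := log_le_log hminorant_pos (exp_neg_mul_le_cdf_gammaMeasure ha hr ht.le)
    have hupper := log_le_log
      (hminorant_pos.trans_le (exp_neg_mul_le_cdf_gammaMeasure ha hr ht.le))
      (cdf_gammaMeasure_le ha hr ht.le)
    rw [log_mul (exp_pos _).ne' hmajorant_pos.ne', log_exp, hlog_majorant] at hlower
    rw [hlog_majorant] at hupper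
    constructor <;> linarith
  have hlower : Tendsto (fun t => c - r * t) (𝓝[>] 0) (𝓝 c) :=
    tendsto_nhdsWithin_of_tendsto_nhds
      ((continuous_const.sub (continuous_const.mul continuous_id)).tendsto' 0 c (by simp [c]))
  refine tendsto_of_tendsto_of_tendsto_of_le_of_le' hlower tendsto_const_nhds ?_ ?_ <;>
    filter_upwards [self_mem_nhdsWithin] with t (ht : 0 < t)
  exacts [(hbounds t ht).1, (hbounds t ht).2]

end ProbabilityTheory

section Threshold

variable {s ρ : ℝ}

lemma log_one_add_mul_lt_mul_log_iff {x : ℝ} (hρ : 0 < ρ) (hx : 0 ≤ x) :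
    log (1 + ρ * x) < s * log ρ ↔ x < (ρ ^ s - 1) / ρ := by
  rw [← log_rpow hρ, log_lt_log_iff (by positivity) (rpow_pos_of_pos hρ s), lt_div_iff₀ hρ]
  constructor <;> intro h <;> linarith

lemma rpow_sub_one_div_eq_mul (hρ : 0 < ρ) :
    (ρ ^ s - 1) / ρ = ρ ^ (s - 1) * (1 - ρ ^ (-s)) := by
  rw [rpow_sub hρ, rpow_neg hρ.le, rpow_one]
  field_simp

lemma tendsto_one_sub_rpow_neg_atTop (hs : 0 < s) :
    Tendsto (fun ρ : ℝ => 1 - ρ ^ (-s)) atTop (𝓝 1) := by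
  simpa using tendsto_const_nhds.sub (tendsto_rpow_neg_atTop hs)

lemma tendsto_rpow_sub_one_div_atTop (hs0 : 0 < s) (hs1 : s < 1) :
    Tendsto (fun ρ : ℝ => (ρ ^ s - 1) / ρ) atTop (𝓝[>] 0) := by
  refine tendsto_nhdsWithin_iff.mpr ⟨?_, ?_⟩
  · have h := (tendsto_rpow_neg_atTop (sub_pos.mpr hs1)).mul (tendsto_one_sub_rpow_neg_atTop hs0)
    rw [zero_mul] at h
    refine h.congr' ?_
    filter_upwards [eventually_gt_atTop 0] with ρ hρ
    rw [rpow_sub_one_div_eq_mul hρ, neg_sub]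
  · filter_upwards [eventually_gt_atTop 1] with ρ hρ
    exact div_pos (sub_pos.mpr (one_lt_rpow hρ hs0)) (by linarith)

lemma tendsto_log_rpow_sub_one_div_div_log (hs : 0 < s) :
    Tendsto (fun ρ : ℝ => log ((ρ ^ s - 1) / ρ) / log ρ) atTop (𝓝 (s - 1)) := by
  have h := tendsto_const_nhds (x := s - 1) |>.add
    (((continuousAt_log one_ne_zero).tendsto.comp (tendsto_one_sub_rpow_neg_atTop hs)).mul
      (tendsto_inv_atTop_zero.comp tendsto_log_atTop))
  rw [log_one, zero_mul, add_zero] at h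
  refine h.congr' ?_
  filter_upwards [eventually_gt_atTop 1] with ρ hρ
  have hρ0 : 0 < ρ := by linarith
  have hfactor : 0 < 1 - ρ ^ (-s) := sub_pos.mpr (rpow_lt_one_of_one_lt_of_neg hρ (by linarith))
  simp only [Function.comp_apply]
  rw [rpow_sub_one_div_eq_mul hρ0, log_mul (rpow_pos_of_pos hρ0 _).ne' hfactor.ne',
    log_rpow hρ0]
  field_simp [(log_pos hρ).ne']

end Threshold

theorem stmt2_general (M : ℕ) (hM : 1 ≤ M) (r : ℝ) (hr0 : 0 < r) (hr1 : r < 1 / 2)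
    (Ω : Type*) [MeasureSpace Ω]
    (X : Ω → ℝ) (hXmeas : Measurable X) (hXpos : ∀ ω, 0 ≤ X ω)
    (hlaw : Measure.map X ℙ = gammaMeasure (M : ℝ) 1) :
    Tendsto
      (fun ρ : ℝ =>
        Real.log (ℙ {ω | Real.log (1 + ρ * X ω) < 2 * r * Real.log ρ}).toReal
          / Real.log ρ)
      atTop (nhds (-((M : ℝ) * (1 - 2 * r)))) := by
  have hM0 : (0 : ℝ) < M := by exact_mod_cast hM
  set τ : ℝ → ℝ := fun ρ => (ρ ^ (2 * r) - 1) / ρ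
  have houtage : ∀ ρ > 0, (ℙ {ω | log (1 + ρ * X ω) < 2 * r * log ρ}).toReal =
      cdf (gammaMeasure M 1) (τ ρ) := by
    intro ρ hρ
    have hset : {ω | log (1 + ρ * X ω) < 2 * r * log ρ} = X ⁻¹' Iio (τ ρ) := by
      ext ω
      exact log_one_add_mul_lt_mul_log_iff hρ (hXpos ω)
    rw [hset, ← Measure.map_apply hXmeas measurableSet_Iio, hlaw,
      gammaMeasure_Iio_toReal hM0 one_pos]
  have hτ := tendsto_rpow_sub_one_div_atTop (s := 2 * r) (by linarith) (by linarith)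
  have hbounded_part := ((tendsto_log_cdf_gammaMeasure_sub_mul_log hM0 one_pos).comp hτ).mul
    (tendsto_inv_atTop_zero.comp tendsto_log_atTop)
  have hmain_part := (tendsto_log_rpow_sub_one_div_div_log (s := 2 * r) (by linarith)).const_mul
    (M : ℝ)
  have hlim := hbounded_part.add hmain_part
  rw [mul_zero, zero_add, show (M : ℝ) * (2 * r - 1) = -(M * (1 - 2 * r)) by ring] at hlim
  refine hlim.congr' ?_
  filter_upwards [eventually_gt_atTop 0] with ρ hρ
  simp only [Function.comp_apply, houtage ρ hρ]
  ring

/-- if `X ≥ 0` has law `Gamma(M, 1)`, then for `0 < r < 1/2` the outage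
probability `P(log(1 + ρX) < 2r log ρ)` has high-SNR exponential order `-M(1 - 2r)`:
`lim_{ρ→∞} log P(log(1+ρX) < 2r log ρ) / log ρ = -M(1-2r)`. -/
theorem stmt2 (M : ℕ) (hM : 1 ≤ M) (r : ℝ) (hr0 : 0 < r) (hr1 : r < 1 / 2)
    (Ω : Type*) [MeasureSpace Ω] [IsProbabilityMeasure (ℙ : Measure Ω)]
    (X : Ω → ℝ) (hXmeas : Measurable X) (hXpos : ∀ ω, 0 ≤ X ω)
    (hlaw : Measure.map X ℙ = gammaMeasure (M : ℝ) 1) :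
    Tendsto
      (fun ρ : ℝ =>
        Real.log (ℙ {ω | Real.log (1 + ρ * X ω) < 2 * r * Real.log ρ}).toReal
          / Real.log ρ)
      atTop (nhds (-((M : ℝ) * (1 - 2 * r)))) :=
  stmt2_general M hM r hr0 hr1 Ω X hXmeas hXpos hlaw
end

section
/- Let K ≥ 1 and M ≥ 1 be integers and let r > 0 satisfy r·max(1, 2K/M) + K r < 1. Then there exists a* ∈ (0, 1) such that d^MAC-sym_{2K,1,M}(r/a*) = d^PPC_{M,1}(K r/(1 − a*)) > 0, and moreover sup_{a ∈ (0,1)} min{ d^MAC-sym_{2K,1,M}(r/a), d^PPC_{M,1}(K r/(1 − a)) } equals this common value. (This is the balancing condition of Lemma 1 characterizing the optimal static time allocation of the DF-MAC-TDMA scheme, in which the first-phase exponent is d^MAC-sym_{2K,1,M}(r/a) and the second-phase exponent is d^PPC_{M,1}(Kr/(1−a)).) -/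
theorem mul_min_one_div {c : ℝ} (hc : 0 < c) (a : ℝ) : c * min 1 (a / c) = min c a := by
  rw [mul_min_of_nonneg _ _ hc.le, mul_one, mul_div_cancel₀ _ hc.ne']

theorem div_mul_max_one_div {r a b : ℝ} (hr : 0 < r) (ha : 0 < a) (hb : 0 < b) :
    r / (r * max 1 (a / b)) = min 1 (b / a) := by
  rcases le_total 1 (a / b) with h | h
  · rw [max_eq_right h, min_eq_right ((div_le_one ha).2 ((one_le_div hb).1 h))]
    field_simp
  · rw [max_eq_left h, min_eq_left ((one_le_div ha).2 ((div_le_one hb).1 h))]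
    field_simp

theorem isGreatest_image_min_of_eq {α β : Type*} [LinearOrder α] [LinearOrder β] {F G : α → β}
    {S : Set α} (hF : MonotoneOn F S) (hG : AntitoneOn G S) {a : α} (ha : a ∈ S)
    (hFG : F a = G a) : IsGreatest ((fun b => min (F b) (G b)) '' S) (G a) := by
  refine ⟨⟨a, ha, by simp [hFG]⟩, ?_⟩
  rintro _ ⟨b, hb, rfl⟩
  rcases le_total b a with hba | hab
  · exact (min_le_left _ _).trans (hFG ▸ hF hb ha hba)
  · exact (min_le_right _ _).trans (hG ha hb hab)

section PointToPoint

variable {m n : ℕ} {x : ℝ}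

theorem dPPC_of_min_le (h : min (m : ℝ) n ≤ x) : dPPC m n x = 0 := if_pos h

theorem dPPC_of_le_min (h : x ≤ min (m : ℝ) n) :
    dPPC m n x = (m - x) * (n - x) + Int.fract x * (1 - Int.fract x) := by
  rcases h.lt_or_eq with h | rfl
  · rw [dPPC, if_neg h.not_ge, ← Int.self_sub_floor]
    ring
  · rw [dPPC_of_min_le le_rfl]
    rcases min_choice (m : ℝ) n with h | h <;> rw [h] <;> simp

theorem dPPC_pos (h : x < min (m : ℝ) n) : 0 < dPPC m n x := by
  rw [dPPC_of_le_min h.le]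
  have hm : x < m := h.trans_le (min_le_left _ _)
  have hn : x < n := h.trans_le (min_le_right _ _)
  exact add_pos_of_pos_of_nonneg (mul_pos (by linarith) (by linarith))
    (mul_nonneg (Int.fract_nonneg x) (by linarith [Int.fract_lt_one x]))

theorem dPPC_nonneg (m n : ℕ) (x : ℝ) : 0 ≤ dPPC m n x := by
  rcases le_or_gt (min (m : ℝ) n) x with h | h
  · exact (dPPC_of_min_le h).ge
  · exact (dPPC_pos h).le

theorem continuous_dPPC (m n : ℕ) : Continuous (dPPC m n) := by
  have hform : dPPC m n = fun x => if x ≤ min (m : ℝ) n then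
      (m - x) * (n - x) + Int.fract x * (1 - Int.fract x) else 0 := by
    funext x
    split_ifs with h
    · exact dPPC_of_le_min h
    · exact dPPC_of_min_le (not_le.1 h).le
  have hbump : Continuous fun x : ℝ => Int.fract x * (1 - Int.fract x) :=
    ContinuousOn.comp_fract'' (f := fun t : ℝ => t * (1 - t)) (by fun_prop) (by norm_num)
  rw [hform]
  refine Continuous.if_le (by fun_prop) continuous_const continuous_id continuous_const ?_
  intro x hx
  rw [← dPPC_of_le_min hx.le, dPPC_of_min_le hx.ge]

theorem antitone_dPPC (m n : ℕ) : Antitone (dPPC m n) := by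
  intro x y hxy
  rcases le_or_gt (min (m : ℝ) n) y with hy | hy
  · exact (dPPC_of_min_le hy).trans_le (dPPC_nonneg m n x)
  rw [dPPC_of_le_min hy.le, dPPC_of_le_min (hxy.trans hy.le), ← Int.self_sub_floor,
    ← Int.self_sub_floor]
  have hym : y < m := hy.trans_le (min_le_left _ _)
  have hyn : y < n := hy.trans_le (min_le_right _ _)
  have hlm : (⌊y⌋ : ℝ) + 1 ≤ m := by exact_mod_cast Int.floor_lt.2 hym
  have hln : (⌊y⌋ : ℝ) + 1 ≤ n := by exact_mod_cast Int.floor_lt.2 hyn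
  have hx0 := Int.floor_le x
  have hx1 := Int.lt_floor_add_one x
  have hy0 := Int.floor_le y
  have hy1 := Int.lt_floor_add_one y
  rcases (Int.floor_le_floor hxy).eq_or_lt with hkl | hkl
  · -- on one linear piece the slope is `-(m + n - 2⌊y⌋ - 1) < 0`
    rw [hkl]
    nlinarith
  · -- across a break point the bump grows by at most `fract y ≤ y - x`, while the parabola
    -- drops by at least `y - x`
    have hkl : (⌊x⌋ : ℝ) + 1 ≤ ⌊y⌋ := by exact_mod_cast hkl
    nlinarith [mul_le_mul_of_nonneg_left (show (1 : ℝ) ≤ m + n - x - y by linarith)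
      (show 0 ≤ y - x by linarith)]

end PointToPoint

section SymmetricMAC

variable {N n : ℕ} {x : ℝ}

theorem dMACsym_one_eq (N n : ℕ) (x : ℝ) :
    dMACsym N 1 n x = if x ≤ min 1 ((n : ℝ) / (N + 1)) then dPPC 1 n x
      else dPPC N n (N * x) := by
  simp only [dMACsym, Nat.cast_one, mul_one]

theorem dPPC_one_left_switch_eq (N n : ℕ) :
    dPPC 1 n (min 1 ((n : ℝ) / (N + 1))) = dPPC N n (N * min 1 ((n : ℝ) / (N + 1))) := by
  rcases Nat.eq_zero_or_pos n with rfl | hn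
  · simp [dPPC_of_min_le]
  rcases le_or_gt n N with hnN | hNn
  · have hN : (n : ℝ) ≤ N := by exact_mod_cast hnN
    have hn : (1 : ℝ) ≤ n := by exact_mod_cast hn
    set s := (n : ℝ) / (N + 1) with hs
    have hs1 : s < 1 := by rw [hs, div_lt_one (by positivity)]; linarith
    have hs0 : 0 < s := by positivity
    have hNs : (N : ℝ) * s = n - s := by rw [hs]; field_simp; ring
    have hfract : Int.fract ((N : ℝ) * s) = 1 - s :=
      Int.fract_eq_iff.2 ⟨by linarith, by linarith, n - 1, by push_cast; linarith⟩
    rw [min_eq_right hs1.le, dPPC_of_le_min (le_min (by simpa using hs1.le) (by linarith)),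
      dPPC_of_le_min (le_min (by linarith) (by linarith)), hfract,
      Int.fract_eq_self.2 ⟨hs0.le, hs1⟩, hNs]
    rw [hs]
    field_simp
    ring
  · have h1 : min 1 ((n : ℝ) / (N + 1)) = 1 := by
      rw [min_eq_left_iff, one_le_div (by positivity)]
      exact_mod_cast hNn
    rw [h1, mul_one, dPPC_of_min_le (by simp), dPPC_of_min_le (min_le_left _ _)]

theorem dMACsym_one_of_switch_le (h : min 1 ((n : ℝ) / (N + 1)) ≤ x) :
    dMACsym N 1 n x = dPPC N n (N * x) := by
  rw [dMACsym_one_eq]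
  split_ifs with hx
  · rw [le_antisymm hx h, dPPC_one_left_switch_eq]
  · rfl

theorem continuous_dMACsym_one (N n : ℕ) : Continuous (dMACsym N 1 n) := by
  have hform : dMACsym N 1 n = fun x => if x ≤ min 1 ((n : ℝ) / (N + 1)) then dPPC 1 n x
      else dPPC N n (N * x) := funext (dMACsym_one_eq N n)
  rw [hform]
  refine Continuous.if_le (continuous_dPPC 1 n)
    ((continuous_dPPC N n).comp (continuous_const_mul _)) continuous_id continuous_const ?_
  intro x hx
  rw [hx]
  exact dPPC_one_left_switch_eq N n

theorem antitone_dMACsym_one (N n : ℕ) : Antitone (dMACsym N 1 n) := by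
  set s := min 1 ((n : ℝ) / (N + 1))
  have hlow : ∀ x ≤ s, dMACsym N 1 n x = dPPC 1 n x := fun x hx => by
    rw [dMACsym_one_eq, if_pos hx]
  have hhigh : AntitoneOn (dMACsym N 1 n) (Set.Ici s) := fun x hx y _ hxy => by
    rw [dMACsym_one_of_switch_le hx, dMACsym_one_of_switch_le (le_trans hx hxy)]
    exact antitone_dPPC N n (by gcongr)
  intro x y hxy
  rcases le_total y s with hy | hy
  · rw [hlow x (hxy.trans hy), hlow y hy]
    exact antitone_dPPC 1 n hxy
  rcases le_total x s with hx | hx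
  · calc dMACsym N 1 n y ≤ dMACsym N 1 n s := hhigh (Set.mem_Ici.2 le_rfl) hy hy
      _ = dPPC 1 n s := hlow s le_rfl
      _ ≤ dPPC 1 n x := antitone_dPPC 1 n hx
      _ = dMACsym N 1 n x := (hlow x hx).symm
  · exact hhigh hx hy hxy

theorem dMACsym_one_of_min_le (hN : 0 < N) (h : min 1 ((n : ℝ) / N) ≤ x) :
    dMACsym N 1 n x = 0 := by
  have hN' : (0 : ℝ) < N := by exact_mod_cast hN
  have hs : min 1 ((n : ℝ) / (N + 1)) ≤ x :=
    le_trans (min_le_min_left _ (div_le_div_of_nonneg_left (by positivity) hN' (by linarith))) h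
  rw [dMACsym_one_of_switch_le hs, dPPC_of_min_le]
  rw [← mul_min_one_div hN']
  gcongr

theorem dMACsym_one_pos (hN : 0 < N) (h : x < min 1 ((n : ℝ) / N)) :
    0 < dMACsym N 1 n x := by
  have hN1 : (1 : ℝ) ≤ N := by exact_mod_cast hN
  have hN' : (0 : ℝ) < N := by exact_mod_cast hN
  rw [dMACsym_one_eq]
  split_ifs
  · refine dPPC_pos (h.trans_le ?_)
    push_cast
    exact min_le_min_left _ (div_le_self (Nat.cast_nonneg n) hN1)
  · refine dPPC_pos ?_
    rw [← mul_min_one_div hN']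
    gcongr

end SymmetricMAC

theorem monotoneOn_dMACsym_div (N n : ℕ) {r : ℝ} (hr : 0 ≤ r) :
    MonotoneOn (fun a => dMACsym N 1 n (r / a)) (Set.Ioi 0) := fun _ ha _ _ hab =>
  antitone_dMACsym_one N n (div_le_div_of_nonneg_left hr ha hab)

theorem antitoneOn_dPPC_div_one_sub (m n : ℕ) {c : ℝ} (hc : 0 ≤ c) :
    AntitoneOn (fun a => dPPC m n (c / (1 - a))) (Set.Iio 1) := fun _ _ _ hb hab =>
  antitone_dPPC m n (div_le_div_of_nonneg_left hc (sub_pos.2 hb) (by linarith))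

theorem exists_balanced_allocation {K M : ℕ} (hK : 1 ≤ K) (hM : 1 ≤ M) {r : ℝ} (hr : 0 < r)
    (hcond : r * max 1 ((2 * (K : ℝ)) / (M : ℝ)) + (K : ℝ) * r < 1) :
    ∃ a ∈ Set.Ioo (0 : ℝ) 1,
      dMACsym (2 * K) 1 M (r / a) = dPPC M 1 ((K : ℝ) * r / (1 - a)) ∧
      0 < dPPC M 1 ((K : ℝ) * r / (1 - a)) := by
  have hK0 : (0 : ℝ) < K := by exact_mod_cast hK
  have hM1 : (1 : ℝ) ≤ M := by exact_mod_cast hM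
  set F := fun a : ℝ => dMACsym (2 * K) 1 M (r / a)
  set G := fun a : ℝ => dPPC M 1 (K * r / (1 - a))
  set a₀ := r * max 1 (2 * (K : ℝ) / M)
  set a₁ := 1 - K * r
  have hswitch : r / a₀ = min 1 ((M : ℝ) / (2 * K)) :=
    div_mul_max_one_div hr (by positivity) (by positivity)
  have ha₀ : 0 < a₀ := mul_pos hr (lt_max_of_lt_left one_pos)
  have ha₀₁ : a₀ < a₁ := by linarith
  have ha₁ : a₁ < 1 := by linarith [mul_pos hK0 hr]
  have hF₀ : F a₀ = 0 := dMACsym_one_of_min_le (by omega) (by push_cast; rw [hswitch])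
  have hF_pos : ∀ a, a₀ < a → 0 < F a := fun a ha => dMACsym_one_pos (by omega) (by
    push_cast
    rw [← hswitch]
    exact div_lt_div_of_pos_left hr ha₀ ha)
  have hG₁ : G a₁ = 0 := dPPC_of_min_le (by
    rw [show 1 - a₁ = (K : ℝ) * r by ring, div_self (by positivity)]
    exact (min_le_right _ _).trans_eq Nat.cast_one)
  have hG_pos : ∀ a, a < a₁ → 0 < G a := fun a ha => dPPC_pos (by
    rw [Nat.cast_one, min_eq_right hM1, div_lt_one (by linarith)]
    linarith)
  have hcont : ContinuousOn (fun a => F a - G a) (Set.Icc a₀ a₁) := by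
    refine ContinuousOn.sub ?_ ?_
    · refine (continuous_dMACsym_one _ _).comp_continuousOn
        (continuousOn_const.div continuousOn_id fun a ha => ?_)
      exact (ha₀.trans_le ha.1).ne'
    · refine (continuous_dPPC _ _).comp_continuousOn
        (continuousOn_const.div (continuousOn_const.sub continuousOn_id) fun a ha => ?_)
      exact (sub_pos.2 (ha.2.trans_lt ha₁)).ne'
  have hsign : (0 : ℝ) ∈ Set.Icc (F a₀ - G a₀) (F a₁ - G a₁) :=
    ⟨by linarith [dPPC_nonneg M 1 (K * r / (1 - a₀))], by linarith [hF_pos a₁ ha₀₁]⟩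
  obtain ⟨a, ha, hFG⟩ := intermediate_value_Icc ha₀₁.le hcont hsign
  refine ⟨a, ⟨ha₀.trans_le ha.1, ha.2.trans_lt ha₁⟩, sub_eq_zero.1 hFG, ?_⟩
  rcases ha.2.lt_or_eq with h | h
  · exact hG_pos a h
  · show 0 < G a
    rw [← sub_eq_zero.1 hFG]
    exact hF_pos a (h ▸ ha₀₁)

/-- Lemma 1, balancing condition for static DF-MAC-TDMA: if `K, M ≥ 1`
and `r > 0` satisfies `r·max(1, 2K/M) + Kr < 1`, then there is a time allocation
`a* ∈ (0,1)` making the two phase exponents equal and positive,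
`d^MAC-sym_{2K,1,M}(r/a*) = d^PPC_{M,1}(Kr/(1-a*)) > 0`, and the sup over `a ∈ (0,1)`
of the min of the two phase exponents equals this common value. -/
theorem stmt4 (K M : ℕ) (hK : 1 ≤ K) (hM : 1 ≤ M) (r : ℝ) (hr : 0 < r)
    (hcond : r * max 1 ((2 * (K : ℝ)) / (M : ℝ)) + (K : ℝ) * r < 1) :
    ∃ a ∈ Set.Ioo (0 : ℝ) 1,
      dMACsym (2 * K) 1 M (r / a) = dPPC M 1 ((K : ℝ) * r / (1 - a)) ∧
      0 < dPPC M 1 ((K : ℝ) * r / (1 - a)) ∧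
      sSup ((fun b : ℝ =>
          min (dMACsym (2 * K) 1 M (r / b)) (dPPC M 1 ((K : ℝ) * r / (1 - b)))) ''
          Set.Ioo 0 1)
        = dPPC M 1 ((K : ℝ) * r / (1 - a)) := by
  obtain ⟨a, ha, hbalance, hpos⟩ := exists_balanced_allocation hK hM hr hcond
  refine ⟨a, ha, hbalance, hpos, IsGreatest.csSup_eq ?_⟩
  exact isGreatest_image_min_of_eq
    ((monotoneOn_dMACsym_div _ _ hr.le).mono Set.Ioo_subset_Ioi_self)
    ((antitoneOn_dPPC_div_one_sub _ _ (by positivity)).mono Set.Ioo_subset_Iio_self) ha hbalance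
end

section
/- Let K ≥ 1 and M ≥ 1 be integers and let r > 0 satisfy r·( max(1, 2K/M) + max(1, K/M) ) < 1. Then there exists a* ∈ (0, 1) such that d^MAC-sym_{2K,1,M}(r/a*) = d^MAC-sym_{K,1,M}(r/(1 − a*)) > 0, and sup_{a ∈ (0,1)} min{ d^MAC-sym_{2K,1,M}(r/a), d^MAC-sym_{K,1,M}(r/(1 − a)) } equals this common value. (This is the existence of the optimal static time allocation a* in Theorem 1 for the DF-MAC-BC scheme, whose first-phase exponent is d^MAC-sym_{2K,1,M}(r/a) and whose second-phase exponent, by MAC–BC duality, is d^MAC-sym_{K,1,M}(r/(1−a)).) -/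
/-! With one antenna per user and `ρ ≥ 0`, the MAC curve `d^MAC-sym_{N,1,M}(ρ)` is the positive
part of an explicit continuous antitone function of `ρ`. The two phase exponents
`a ↦ d^MAC-sym_{2K,1,M}(r/a)` and `a ↦ d^MAC-sym_{K,1,M}(r/(1-a))` are therefore continuous on
`(0,1)`, the first nondecreasing and the second nonincreasing. The first vanishes at
`a = r·max(1, 2K/M)` while the second is still positive there, and symmetrically at
`a = 1 - r·max(1, K/M)`; the hypothesis on `r` puts the first point to the left of the second,
so the intermediate value theorem gives a crossing point `a*` with positive common value, and
monotonicity makes it the maximiser of the minimum. -/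

open Set

theorem dPPC_one_left_s5 {M : ℕ} (hM : 1 ≤ M) {ρ : ℝ} (h0 : 0 ≤ ρ) (h1 : ρ < 1) :
    dPPC 1 M ρ = M * (1 - ρ) := by
  have hM1 : (1 : ℝ) ≤ M := by exact_mod_cast hM
  rw [dPPC, if_neg (by simpa [hM1] using h1), Int.floor_eq_zero_iff.2 ⟨h0, h1⟩]
  push_cast
  ring

theorem dPPC_of_mem_Ico {N M : ℕ} (hMN : M ≤ N) {x : ℝ} (hx : x ∈ Ico ((M : ℝ) - 1) M) :
    dPPC N M x = ((N : ℝ) - M + 1) * (M - x) := by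
  have hMN' : (M : ℝ) ≤ N := by exact_mod_cast hMN
  have hfloor : ⌊x⌋ = (M : ℤ) - 1 := by
    rw [Int.floor_eq_iff]
    push_cast
    constructor <;> linarith [hx.1, hx.2]
  rw [dPPC, if_neg (by rw [min_eq_right hMN']; exact not_le.2 hx.2), hfloor]
  push_cast
  ring

/-- For `M ≤ N` the two pieces are the segment of `d^PPC_{1,M}` on `[0,1]` and the last segment
of `d^PPC_{N,M}` on `[M-1, M]`, evaluated at `Nρ`; for `N < M` only the first piece is active. -/
noncomputable def dMACsymOneUnclipped (N M : ℕ) (ρ : ℝ) : ℝ :=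
  if M ≤ N then min ((M : ℝ) * (1 - ρ)) (((N : ℝ) - M + 1) * (M - N * ρ))
  else (M : ℝ) * (1 - ρ)

section dMACsymOne

variable {N M : ℕ}

theorem continuous_dMACsymOneUnclipped : Continuous (dMACsymOneUnclipped N M) := by
  unfold dMACsymOneUnclipped
  split <;> fun_prop

theorem antitone_dMACsymOneUnclipped : Antitone (dMACsymOneUnclipped N M) := by
  intro x y hxy
  unfold dMACsymOneUnclipped
  split
  · next hMN =>
    have : (0 : ℝ) ≤ N - M + 1 := by
      have : (M : ℝ) ≤ N := by exact_mod_cast hMN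
      linarith
    gcongr
  · gcongr

theorem dMACsymOneUnclipped_pos_iff (hM : 1 ≤ M) {ρ : ℝ} :
    0 < dMACsymOneUnclipped N M ρ ↔ ρ < 1 ∧ N * ρ < M := by
  have hM1 : (1 : ℝ) ≤ M := by exact_mod_cast hM
  have hN0 : (0 : ℝ) ≤ N := N.cast_nonneg
  unfold dMACsymOneUnclipped
  split
  · next hMN =>
    have hMN' : (M : ℝ) ≤ N := by exact_mod_cast hMN
    rw [lt_min_iff]
    refine and_congr ?_ ?_ <;> constructor <;> intro h <;> nlinarith
  · next hNM =>
    have hNM' : (N : ℝ) < M := by exact_mod_cast not_le.1 hNM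
    constructor <;> intro h
    · exact ⟨by nlinarith, by nlinarith⟩
    · nlinarith [h.1]

theorem dMACsym_one_eq_unclipped (hM : 1 ≤ M) {ρ : ℝ} (h0 : 0 ≤ ρ) (h1 : ρ < 1)
    (h2 : N * ρ < M) : dMACsym N 1 M ρ = dMACsymOneUnclipped N M ρ := by
  have hM1 : (1 : ℝ) ≤ M := by exact_mod_cast hM
  have hN1 : (0 : ℝ) < N + 1 := by positivity
  -- the two pieces of `dMACsymOneUnclipped` differ by `(N - M) * ((N + 1) * ρ - M)`
  unfold dMACsym dMACsymOneUnclipped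
  simp only [Nat.cast_one, Nat.mul_one, le_min_iff, le_div_iff₀ hN1]
  split_ifs with hfirst hMN hMN
  · have hMN' : (M : ℝ) ≤ N := by exact_mod_cast hMN
    rw [dPPC_one_left_s5 hM h0 h1, min_eq_left]
    nlinarith [hfirst.2]
  · exact dPPC_one_left_s5 hM h0 h1
  · have hMN' : (M : ℝ) ≤ N := by exact_mod_cast hMN
    have hρ : M < ρ * (N + 1) := by
      simp only [not_and_or, not_le] at hfirst
      exact hfirst.resolve_left (not_lt.2 h1.le)
    rw [dPPC_of_mem_Ico hMN ⟨by nlinarith, h2⟩, min_eq_right]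
    nlinarith
  · have hNM : (N : ℝ) + 1 ≤ M := by exact_mod_cast not_le.1 hMN
    exact absurd ⟨h1.le, by nlinarith⟩ hfirst

theorem dMACsym_one_eq_zero (hM : 1 ≤ M) {ρ : ℝ} (h : 1 ≤ ρ ∨ M ≤ N * ρ) :
    dMACsym N 1 M ρ = 0 := by
  have hM1 : (1 : ℝ) ≤ M := by exact_mod_cast hM
  have hN0 : (0 : ℝ) ≤ N := N.cast_nonneg
  have hN1 : (0 : ℝ) < N + 1 := by positivity
  unfold dMACsym dPPC
  simp only [Nat.cast_one, Nat.mul_one, le_min_iff, le_div_iff₀ hN1]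
  split_ifs with hfirst hzero hzero
  · rfl
  · refine absurd ?_ hzero
    rw [min_eq_left hM1]
    rcases h with h | h
    · exact h
    · nlinarith [hfirst.2]
  · rfl
  · refine absurd ?_ hzero
    rcases h with h | h
    · exact min_le_of_left_le (by nlinarith)
    · exact min_le_of_right_le h

theorem dMACsym_one_eq_max (hM : 1 ≤ M) {ρ : ℝ} (h0 : 0 ≤ ρ) :
    dMACsym N 1 M ρ = max (dMACsymOneUnclipped N M ρ) 0 := by
  by_cases h : ρ < 1 ∧ N * ρ < M
  · rw [dMACsym_one_eq_unclipped hM h0 h.1 h.2,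
      max_eq_left ((dMACsymOneUnclipped_pos_iff hM).2 h).le]
  · rw [dMACsym_one_eq_zero hM (by rw [not_and_or, not_lt, not_lt] at h; exact h),
      max_eq_right (not_lt.1 (mt (dMACsymOneUnclipped_pos_iff hM).1 h))]

theorem continuousOn_dMACsym_one (hM : 1 ≤ M) : ContinuousOn (dMACsym N 1 M) (Ici 0) :=
  (continuous_dMACsymOneUnclipped.max continuous_const).continuousOn.congr
    fun _ hρ => dMACsym_one_eq_max hM hρ

theorem antitoneOn_dMACsym_one (hM : 1 ≤ M) : AntitoneOn (dMACsym N 1 M) (Ici 0) := by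
  intro x hx y hy hxy
  rw [dMACsym_one_eq_max hM hx, dMACsym_one_eq_max hM hy]
  exact max_le_max_right 0 (antitone_dMACsymOneUnclipped hxy)

theorem dMACsym_one_pos_iff (hM : 1 ≤ M) {ρ : ℝ} (h0 : 0 ≤ ρ) :
    0 < dMACsym N 1 M ρ ↔ ρ < 1 ∧ N * ρ < M := by
  rw [dMACsym_one_eq_max hM h0, lt_max_iff, or_iff_left (lt_irrefl 0),
    dMACsymOneUnclipped_pos_iff hM]

variable {r : ℝ}

theorem dMACsym_one_div_pos_iff (hM : 1 ≤ M) (hr : 0 ≤ r) {a : ℝ} (ha : 0 < a) :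
    0 < dMACsym N 1 M (r / a) ↔ r * max 1 ((N : ℝ) / M) < a := by
  have hM0 : (0 : ℝ) < M := by exact_mod_cast hM
  rw [dMACsym_one_pos_iff hM (div_nonneg hr ha.le), mul_max_of_nonneg _ _ hr, max_lt_iff,
    mul_one, div_lt_one ha, mul_div_assoc', div_lt_iff₀ ha, mul_div_assoc', div_lt_iff₀ hM0,
    mul_comm r, mul_comm a]

theorem continuousOn_dMACsym_one_div (hM : 1 ≤ M) (hr : 0 ≤ r) :
    ContinuousOn (fun a => dMACsym N 1 M (r / a)) (Ioi 0) :=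
  (continuousOn_dMACsym_one hM).comp (continuousOn_const.div continuousOn_id fun _ ha => ha.ne')
    fun _ ha => div_nonneg hr (le_of_lt ha)

theorem monotoneOn_dMACsym_one_div (hM : 1 ≤ M) (hr : 0 ≤ r) :
    MonotoneOn (fun a => dMACsym N 1 M (r / a)) (Ioi 0) := fun _ hx _ hy hxy =>
  antitoneOn_dMACsym_one hM (div_nonneg hr (le_of_lt hy)) (div_nonneg hr (le_of_lt hx))
    (div_le_div_of_nonneg_left hr hx hxy)

theorem dMACsym_one_div_one_sub_pos_iff (hM : 1 ≤ M) (hr : 0 ≤ r) {a : ℝ} (ha : a < 1) :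
    0 < dMACsym N 1 M (r / (1 - a)) ↔ a < 1 - r * max 1 ((N : ℝ) / M) := by
  rw [dMACsym_one_div_pos_iff hM hr (sub_pos.2 ha), lt_sub_comm]

theorem continuousOn_dMACsym_one_div_one_sub (hM : 1 ≤ M) (hr : 0 ≤ r) :
    ContinuousOn (fun a => dMACsym N 1 M (r / (1 - a))) (Iio 1) :=
  (continuousOn_dMACsym_one_div hM hr).comp (continuousOn_const.sub continuousOn_id)
    fun _ ha => mem_Ioi.2 (sub_pos.2 ha)

theorem antitoneOn_dMACsym_one_div_one_sub (hM : 1 ≤ M) (hr : 0 ≤ r) :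
    AntitoneOn (fun a => dMACsym N 1 M (r / (1 - a))) (Iio 1) := fun _ hx _ hy hxy =>
  monotoneOn_dMACsym_one_div hM hr (mem_Ioi.2 (sub_pos.2 hy)) (mem_Ioi.2 (sub_pos.2 hx))
    (sub_le_sub_left hxy 1)

end dMACsymOne

theorem isGreatest_image_min_of_monotoneOn_of_antitoneOn {α β : Type*} [LinearOrder α]
    [LinearOrder β] {f g : α → β} {s : Set α} {a : α} (hf : MonotoneOn f s)
    (hg : AntitoneOn g s) (ha : a ∈ s) (hfg : f a = g a) :
    IsGreatest ((fun b => min (f b) (g b)) '' s) (f a) := by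
  refine ⟨⟨a, ha, by simp [hfg]⟩, ?_⟩
  rintro _ ⟨b, hb, rfl⟩
  rcases le_total b a with hba | hab
  · exact min_le_of_left_le (hf hb ha hba)
  · exact min_le_of_right_le (hfg ▸ hg ha hb hab)

theorem exists_mem_Ioo_eq_of_continuousOn {f g : ℝ → ℝ} {α β : ℝ} (hαβ : α ≤ β)
    (hf : ContinuousOn f (Icc α β)) (hg : ContinuousOn g (Icc α β)) (hα : f α < g α)
    (hβ : g β < f β) : ∃ a ∈ Ioo α β, f a = g a := by
  obtain ⟨a, ha, hfga⟩ :=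
    intermediate_value_Ioo hαβ (hf.sub hg) ⟨sub_neg.2 hα, sub_pos.2 hβ⟩
  exact ⟨a, ha, sub_eq_zero.1 hfga⟩

theorem stmt5_general (K M : ℕ) (hM : 1 ≤ M) (r : ℝ) (hr : 0 < r)
    (hcond : r * (max 1 ((2 * (K : ℝ)) / (M : ℝ)) + max 1 ((K : ℝ) / (M : ℝ))) < 1) :
    ∃ a ∈ Set.Ioo (0 : ℝ) 1,
      dMACsym (2 * K) 1 M (r / a) = dMACsym K 1 M (r / (1 - a)) ∧
      0 < dMACsym K 1 M (r / (1 - a)) ∧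
      sSup ((fun b : ℝ =>
          min (dMACsym (2 * K) 1 M (r / b)) (dMACsym K 1 M (r / (1 - b)))) ''
          Set.Ioo 0 1)
        = dMACsym K 1 M (r / (1 - a)) := by
  set f : ℝ → ℝ := fun a => dMACsym (2 * K) 1 M (r / a)
  set g : ℝ → ℝ := fun a => dMACsym K 1 M (r / (1 - a))
  set α := r * max 1 (2 * (K : ℝ) / M)
  set β := 1 - r * max 1 ((K : ℝ) / M)
  have hf_pos {a : ℝ} (ha : 0 < a) : 0 < f a ↔ α < a := by
    simpa using dMACsym_one_div_pos_iff (N := 2 * K) hM hr.le ha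
  have hg_pos {a : ℝ} (ha : a < 1) : 0 < g a ↔ a < β :=
    dMACsym_one_div_one_sub_pos_iff hM hr.le ha
  have hα : 0 < α := mul_pos hr (lt_max_of_lt_left one_pos)
  have hβ : β < 1 := sub_lt_self 1 (mul_pos hr (lt_max_of_lt_left one_pos))
  have hαβ : α < β := by unfold α β; linarith
  have hfα : f α ≤ 0 := not_lt.1 fun h => lt_irrefl α ((hf_pos hα).1 h)
  have hgβ : g β ≤ 0 := not_lt.1 fun h => lt_irrefl β ((hg_pos hβ).1 h)
  obtain ⟨a, ⟨hαa, haβ⟩, hfg⟩ := exists_mem_Ioo_eq_of_continuousOn hαβ.le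
    ((continuousOn_dMACsym_one_div hM hr.le).mono fun _ hx => hα.trans_le hx.1)
    ((continuousOn_dMACsym_one_div_one_sub hM hr.le).mono fun _ hx => hx.2.trans_lt hβ)
    (hfα.trans_lt ((hg_pos (hαβ.trans hβ)).2 hαβ))
    (hgβ.trans_lt ((hf_pos (hα.trans hαβ)).2 hαβ))
  have ha : a ∈ Ioo 0 1 := ⟨hα.trans hαa, haβ.trans hβ⟩
  refine ⟨a, ha, hfg, (hg_pos ha.2).2 haβ, ?_⟩
  exact (isGreatest_image_min_of_monotoneOn_of_antitoneOn
    ((monotoneOn_dMACsym_one_div hM hr.le).mono Ioo_subset_Ioi_self)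
    ((antitoneOn_dMACsym_one_div_one_sub hM hr.le).mono Ioo_subset_Iio_self) ha hfg).csSup_eq.trans
    hfg

/-- Theorem 1, balancing condition for static DF-MAC-BC: if `K, M ≥ 1`
and `r > 0` satisfies `r(max(1, 2K/M) + max(1, K/M)) < 1`, then there is a time
allocation `a* ∈ (0,1)` with `d^MAC-sym_{2K,1,M}(r/a*) = d^MAC-sym_{K,1,M}(r/(1-a*)) > 0`,
and the sup over `a ∈ (0,1)` of the min of the two phase exponents equals this common
value. -/
theorem stmt5 (K M : ℕ) (hK : 1 ≤ K) (hM : 1 ≤ M) (r : ℝ) (hr : 0 < r)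
    (hcond : r * (max 1 ((2 * (K : ℝ)) / (M : ℝ)) + max 1 ((K : ℝ) / (M : ℝ))) < 1) :
    ∃ a ∈ Set.Ioo (0 : ℝ) 1,
      dMACsym (2 * K) 1 M (r / a) = dMACsym K 1 M (r / (1 - a)) ∧
      0 < dMACsym K 1 M (r / (1 - a)) ∧
      sSup ((fun b : ℝ =>
          min (dMACsym (2 * K) 1 M (r / b)) (dMACsym K 1 M (r / (1 - b)))) ''
          Set.Ioo 0 1)
        = dMACsym K 1 M (r / (1 - a)) :=
  stmt5_general K M hM r hr hcond
end

section
/- Let M ≥ 1 and K ≥ 1 be integers. Define, for α₁, α₂ ≥ 0, S₁ = (1 − α₁)^+ and S₂ = (1 − α₂)^+. For every real r: (i) if 0 < r < 1/(K+1), then inf{ M(α₁ + α₂) : α₁ ≥ 0, α₂ ≥ 0, S₁ S₂ < r (K S₁ + S₂) } = M (1 − (K+1) r) / (1 − r); (ii) if r > 1/(K+1), then this infimum equals 0. (This is the optimization d_out(r) solved in the converse of Theorem 2, yielding the upper bound d(r) ≤ M((1 − (K+1)r)/(1 − r))^+.) -/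
/-!
Feasibility only constrains `α₁ + α₂` from below through `S₁ + S₂`, since `αᵢ ≥ 1 - Sᵢ`.
On the box `S₁, S₂ ≤ 1` the outage constraint forces `(S₁ + S₂)(1 - r) < 1 + (K - 1) r`, hence
`α₁ + α₂ > (1 - (K + 1) r)/(1 - r)`, and this bound is approached by `α₁ = 0`. When
`r (K + 1) > 1` the point `α₁ = α₂ = 0` is itself feasible.
-/

open Set Pointwise

def outageSumSet (K r : ℝ) : Set ℝ :=
  {s | ∃ α₁ α₂ : ℝ, 0 ≤ α₁ ∧ 0 ≤ α₂ ∧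
    max (1 - α₁) 0 * max (1 - α₂) 0 < r * (K * max (1 - α₁) 0 + max (1 - α₂) 0) ∧
    s = α₁ + α₂}

theorem add_mul_one_sub_lt_of_mul_lt {K r x y : ℝ} (hK : 1 ≤ K) (hr : 0 ≤ r)
    (hx : x ≤ 1) (hy : y ≤ 1) (hxy : x * y < r * (K * x + y)) :
    (x + y) * (1 - r) < 1 + (K - 1) * r := by
  -- `x y - r (K x + y) = (x + y)(1 - r) - (1 + (K - 1) r) + (1 - x)(1 - y) + (1 - x) r (K - 1)`
  nlinarith [mul_nonneg (sub_nonneg.2 hx) (sub_nonneg.2 hy),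
    mul_nonneg (sub_nonneg.2 hx) (mul_nonneg hr (sub_nonneg.2 hK))]

theorem outageSumSet_subset_Ici {K r : ℝ} (hK : 1 ≤ K) (hr₀ : 0 ≤ r) (hr₁ : r < 1) :
    outageSumSet K r ⊆ Ici ((1 - (K + 1) * r) / (1 - r)) := by
  rintro _ ⟨α₁, α₂, hα₁, hα₂, hout, rfl⟩
  have hS := add_mul_one_sub_lt_of_mul_lt hK hr₀ (max_le (by linarith) zero_le_one)
    (max_le (by linarith) zero_le_one) hout
  rw [mem_Ici, div_le_iff₀ (sub_pos.2 hr₁)]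
  nlinarith [le_max_left (1 - α₁) 0, le_max_left (1 - α₂) 0]

theorem Ioi_subset_outageSumSet {K r : ℝ} (hK : 0 < K) (hr : 0 < r) (hrK : r * (K + 1) ≤ 1) :
    Ioi ((1 - (K + 1) * r) / (1 - r)) ⊆ outageSumSet K r := by
  have hr₁ : 0 < 1 - r := by nlinarith
  intro b hb
  rw [mem_Ioi, div_lt_iff₀ hr₁] at hb
  refine ⟨0, b, le_rfl, ?_, ?_, (zero_add b).symm⟩
  · nlinarith
  · have hS : max (1 - b) 0 * (1 - r) < r * K := by
      rw [max_mul_of_nonneg _ _ hr₁.le, zero_mul]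
      exact max_lt (by nlinarith) (by positivity)
    simp only [sub_zero, max_eq_left zero_le_one]
    nlinarith

theorem csInf_outageSumSet {K r : ℝ} (hK : 1 ≤ K) (hr : 0 < r) (hrK : r * (K + 1) ≤ 1) :
    sInf (outageSumSet K r) = (1 - (K + 1) * r) / (1 - r) := by
  have hIoi := Ioi_subset_outageSumSet (by linarith) hr hrK
  exact (isGLB_Ioi.of_subset_of_superset isGLB_Ici hIoi
    (outageSumSet_subset_Ici hK hr.le (by nlinarith))).csInf_eq (nonempty_Ioi.mono hIoi)

theorem csInf_outageSumSet_of_one_lt {K r : ℝ} (hrK : 1 < r * (K + 1)) :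
    sInf (outageSumSet K r) = 0 := by
  refine IsLeast.csInf_eq ⟨⟨0, 0, le_rfl, le_rfl, ?_, (add_zero 0).symm⟩, ?_⟩
  · simp only [sub_zero, max_eq_left zero_le_one]
    linarith
  · rintro _ ⟨α₁, α₂, hα₁, hα₂, -, rfl⟩
    positivity

theorem setOf_eq_smul_outageSumSet (M K r : ℝ) :
    {d : ℝ | ∃ α₁ α₂ : ℝ, 0 ≤ α₁ ∧ 0 ≤ α₂ ∧
      max (1 - α₁) 0 * max (1 - α₂) 0 < r * (K * max (1 - α₁) 0 + max (1 - α₂) 0) ∧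
      d = M * (α₁ + α₂)} = M • outageSumSet K r := by
  ext d
  simp only [outageSumSet, mem_ofPred_eq, mem_smul_set, smul_eq_mul]
  constructor
  · rintro ⟨α₁, α₂, hα₁, hα₂, hout, rfl⟩
    exact ⟨_, ⟨α₁, α₂, hα₁, hα₂, hout, rfl⟩, rfl⟩
  · rintro ⟨_, ⟨α₁, α₂, hα₁, hα₂, hout, rfl⟩, rfl⟩
    exact ⟨α₁, α₂, hα₁, hα₂, hout, rfl⟩

theorem stmt6_general (M K : ℕ) (hK : 1 ≤ K) (r : ℝ) :
    (0 < r → r < 1 / ((K : ℝ) + 1) →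
      sInf {d : ℝ | ∃ α₁ α₂ : ℝ, 0 ≤ α₁ ∧ 0 ≤ α₂ ∧
          max (1 - α₁) 0 * max (1 - α₂) 0
            < r * ((K : ℝ) * max (1 - α₁) 0 + max (1 - α₂) 0) ∧
          d = (M : ℝ) * (α₁ + α₂)}
        = (M : ℝ) * (1 - ((K : ℝ) + 1) * r) / (1 - r)) ∧
    (1 / ((K : ℝ) + 1) < r →
      sInf {d : ℝ | ∃ α₁ α₂ : ℝ, 0 ≤ α₁ ∧ 0 ≤ α₂ ∧
          max (1 - α₁) 0 * max (1 - α₂) 0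
            < r * ((K : ℝ) * max (1 - α₁) 0 + max (1 - α₂) 0) ∧
          d = (M : ℝ) * (α₁ + α₂)}
        = 0) := by
  have hK₀ : (0 : ℝ) < K + 1 := by positivity
  simp only [setOf_eq_smul_outageSumSet, Real.sInf_smul_of_nonneg (Nat.cast_nonneg M), smul_eq_mul]
  refine ⟨fun hr hrK ↦ ?_, fun hrK ↦ ?_⟩
  · rw [lt_div_iff₀ hK₀] at hrK
    rw [csInf_outageSumSet (by exact_mod_cast hK) hr hrK.le, mul_div_assoc]
  · rw [div_lt_iff₀ hK₀] at hrK
    rw [csInf_outageSumSet_of_one_lt hrK, mul_zero]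

/-- the optimization `d_out(r)` in the converse of Theorem 2: with
`S₁ = (1-α₁)⁺`, `S₂ = (1-α₂)⁺`, the infimum of `M(α₁ + α₂)` over `α₁, α₂ ≥ 0`
subject to the outage constraint `S₁S₂ < r(K S₁ + S₂)` equals
`M(1-(K+1)r)/(1-r)` for `0 < r < 1/(K+1)`, and equals `0` for `r > 1/(K+1)`. -/
theorem stmt6 (M K : ℕ) (hM : 1 ≤ M) (hK : 1 ≤ K) (r : ℝ) :
    (0 < r → r < 1 / ((K : ℝ) + 1) →
      sInf {d : ℝ | ∃ α₁ α₂ : ℝ, 0 ≤ α₁ ∧ 0 ≤ α₂ ∧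
          max (1 - α₁) 0 * max (1 - α₂) 0
            < r * ((K : ℝ) * max (1 - α₁) 0 + max (1 - α₂) 0) ∧
          d = (M : ℝ) * (α₁ + α₂)}
        = (M : ℝ) * (1 - ((K : ℝ) + 1) * r) / (1 - r)) ∧
    (1 / ((K : ℝ) + 1) < r →
      sInf {d : ℝ | ∃ α₁ α₂ : ℝ, 0 ≤ α₁ ∧ 0 ≤ α₂ ∧
          max (1 - α₁) 0 * max (1 - α₂) 0
            < r * ((K : ℝ) * max (1 - α₁) 0 + max (1 - α₂) 0) ∧
          d = (M : ℝ) * (α₁ + α₂)}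
        = 0) :=
  stmt6_general M K hK r
end

section
/- Fix integers K ≥ 1 and M ≥ 2K and a real r with 0 < r < 1/(K+1). For each integer L with 1 ≤ L ≤ 2K define d^L(r) as the infimum of Σ_{j=1}^{L} (2j − 1 + M − L) α_{1,j} + M α_{2} over all (α_{1,1}, …, α_{1,L}, α₂) satisfying α_{1,1} ≥ α_{1,2} ≥ … ≥ α_{1,L} ≥ 0, α₂ ≥ 0, and S₁ S₂ < r (K S₁ + L S₂), where S₁ = Σ_{j=1}^{L} (1 − α_{1,j})^+ and S₂ = (1 − α₂)^+. Then d_DDF(r) := min_{1 ≤ L ≤ 2K} d^L(r) = M (1 − (K+1) r) / (1 − r). (This is the matching of the dynamic decode-and-forward lower bound with the converse upper bound in Theorem 2 when the relay has at least 2K antennas; the index L plays the role of the cardinality |Λ| of the set of users decoded last, and since M ≥ 2K ≥ L the weights 2j − 1 + |M_i − M_{i+1}| of equation (6) specialize to 2j − 1 + (M − L) for the first hop and M for the second hop.) -/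
/-!
Every diversity–multiplexing exponent `d^L(r)` with `1 ≤ L ≤ M` already equals
`M(1 - (K+1)r)/(1 - r)`. Writing `S₁ = a ∈ [0, L]`, `S₂ = b ≤ 1`, the objective is at least
`(M - L + 1)(L - a) + M(1 - b)`, and the outage condition `ab < r(Ka + Lb)` keeps this above
`M(1 - t)` with `t = Kr/(1 - r)`. The bound is approached with `α₁ = 0` and `α₂ ↓ 1 - t`.
-/

open Finset

-- `j : Fin L` is 0-indexed, so the weight `2j + 1 + M - L` is the paper's `2j - 1 + M - L`.
def ddfObjectiveSet (K M L : ℕ) (r : ℝ) : Set ℝ :=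
  {e : ℝ | ∃ (α₁ : Fin L → ℝ) (α₂ : ℝ),
    (∀ i j : Fin L, i ≤ j → α₁ j ≤ α₁ i) ∧ (∀ j, 0 ≤ α₁ j) ∧ 0 ≤ α₂ ∧
    (∑ j, max (1 - α₁ j) 0) * max (1 - α₂) 0
      < r * ((K : ℝ) * (∑ j, max (1 - α₁ j) 0) + (L : ℝ) * max (1 - α₂) 0) ∧
    e = (∑ j : Fin L, (2 * ((j : ℕ) : ℝ) + 1 + (M : ℝ) - (L : ℝ)) * α₁ j) + (M : ℝ) * α₂}

theorem outage_objective_lower_bound {k l m r a b : ℝ} (hk : 1 ≤ k) (hl : 1 ≤ l) (hlm : l ≤ m)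
    (hr0 : 0 ≤ r) (hr1 : r < 1) (hal : a ≤ l) (hb1 : b ≤ 1)
    (hab : a * b ≤ r * (k * a + l * b)) :
    m * (1 - (k + 1) * r) / (1 - r) ≤ (m - l + 1) * (l - a) + m * (1 - b) := by
  have hr' : 0 < 1 - r := by linarith
  obtain ⟨t, ht_def⟩ : ∃ t, t = k * r / (1 - r) := ⟨_, rfl⟩
  have ht : t * (1 - r) = k * r := by rw [ht_def]; exact div_mul_cancel₀ _ hr'.ne'
  have ht0 : 0 ≤ t := by rw [ht_def]; positivity
  have hD : m * (1 - (k + 1) * r) / (1 - r) = m - m * t := by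
    rw [ht_def]; field_simp; ring
  rw [hD]
  suffices m * (b - t) ≤ (m - l + 1) * (l - a) by linarith
  rcases le_or_gt b t with hbt | hbt
  · nlinarith
  -- Above the threshold `t` the outage condition forces `a ≤ r l b / (b - r k)`.
  have hkr : k * r ≤ t := by nlinarith
  have hbk : 0 < b - r * k := by linarith
  have hbt' : 0 ≤ b - t := by linarith
  have hm : 0 ≤ m := by linarith
  have hc : 0 ≤ m - l + 1 := by linarith
  have key : m * (b - t) * (b - r * k) ≤ (m - l + 1) * (l - a) * (b - r * k) :=
    calc m * (b - t) * (b - r * k)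
        ≤ m * (b - t) * (1 - r) := by gcongr; nlinarith
      _ ≤ (m - l + 1) * l * (1 - r) * (b - t) := by
        have hlm' : m ≤ (m - l + 1) * l := by nlinarith
        nlinarith [mul_le_mul_of_nonneg_right hlm' (mul_nonneg hr'.le hbt')]
      _ = (m - l + 1) * (l * (b - r * k) - r * l * b) := by
        linear_combination -(m - l + 1) * l * ht
      _ ≤ (m - l + 1) * (l * (b - r * k) - a * (b - r * k)) :=
        mul_le_mul_of_nonneg_left (by nlinarith) hc
      _ = (m - l + 1) * (l - a) * (b - r * k) := by ring
  exact le_of_mul_le_mul_right key hbk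

section ddfObjectiveSet

variable {K M L : ℕ} {r : ℝ}

theorem le_of_mem_ddfObjectiveSet (hK : 1 ≤ K) (hL : 1 ≤ L) (hLM : L ≤ M) (hr0 : 0 ≤ r)
    (hr1 : r < 1) {e : ℝ} (he : e ∈ ddfObjectiveSet K M L r) :
    (M : ℝ) * (1 - ((K : ℝ) + 1) * r) / (1 - r) ≤ e := by
  obtain ⟨α₁, α₂, -, hα₁, hα₂, hout, rfl⟩ := he
  have hc : (0 : ℝ) ≤ M - L + 1 := by
    have : (L : ℝ) ≤ M := by exact_mod_cast hLM
    linarith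
  have hS₁ : ∑ j, max (1 - α₁ j) 0 ≤ L := by
    simpa using Finset.sum_le_card_nsmul univ (fun j ↦ max (1 - α₁ j) 0) 1
      fun j _ ↦ max_le (by linarith [hα₁ j]) zero_le_one
  have hfirst : ((M : ℝ) - L + 1) * (L - ∑ j, max (1 - α₁ j) 0)
      ≤ ∑ j : Fin L, (2 * ((j : ℕ) : ℝ) + 1 + M - L) * α₁ j := by
    have hL_sum : (L : ℝ) - ∑ j, max (1 - α₁ j) 0 = ∑ j, (1 - max (1 - α₁ j) 0) := by
      simp [Finset.sum_sub_distrib]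
    rw [hL_sum, Finset.mul_sum]
    refine Finset.sum_le_sum fun j _ ↦ ?_
    calc ((M : ℝ) - L + 1) * (1 - max (1 - α₁ j) 0)
        ≤ ((M : ℝ) - L + 1) * α₁ j :=
          mul_le_mul_of_nonneg_left (by linarith [le_max_left (1 - α₁ j) 0]) hc
      _ ≤ (2 * ((j : ℕ) : ℝ) + 1 + M - L) * α₁ j :=
          mul_le_mul_of_nonneg_right (by linarith [j.val.cast_nonneg (α := ℝ)]) (hα₁ j)
  have hsecond : (M : ℝ) * (1 - max (1 - α₂) 0) ≤ M * α₂ :=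
    mul_le_mul_of_nonneg_left (by linarith [le_max_left (1 - α₂) 0]) M.cast_nonneg
  have := outage_objective_lower_bound (m := (M : ℝ)) (by exact_mod_cast hK) (by exact_mod_cast hL)
    (by exact_mod_cast hLM) hr0 hr1 hS₁ (max_le (by linarith) zero_le_one) hout.le
  linarith

theorem mul_mem_ddfObjectiveSet (hL : 1 ≤ L) {α₂ : ℝ} (hα₂ : 0 ≤ α₂) (hα₂1 : α₂ ≤ 1)
    (hout : (1 - α₂) * (1 - r) < K * r) : (M : ℝ) * α₂ ∈ ddfObjectiveSet K M L r := by
  refine ⟨0, α₂, fun _ _ _ ↦ le_rfl, fun _ ↦ le_rfl, hα₂, ?_, by simp⟩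
  have hL0 : (0 : ℝ) < L := by exact_mod_cast hL
  simp only [Pi.zero_apply, sub_zero, max_eq_left zero_le_one, sum_const, card_univ,
    Fintype.card_fin, nsmul_eq_mul, mul_one, max_eq_left (sub_nonneg.2 hα₂1)]
  nlinarith

theorem csInf_ddfObjectiveSet (hK : 1 ≤ K) (hL : 1 ≤ L) (hLM : L ≤ M) (hr0 : 0 < r)
    (hr1 : r * (K + 1) < 1) :
    sInf (ddfObjectiveSet K M L r) = (M : ℝ) * (1 - ((K : ℝ) + 1) * r) / (1 - r) := by
  have hK0 : (1 : ℝ) ≤ K := by exact_mod_cast hK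
  have hM0 : (0 : ℝ) < M := by exact_mod_cast hL.trans hLM
  have hr' : 0 < 1 - r := by nlinarith
  refine csInf_eq_of_forall_ge_of_forall_gt_exists_lt
    ⟨_, mul_mem_ddfObjectiveSet hL zero_le_one le_rfl (by simpa using by positivity)⟩
    (fun e he ↦ le_of_mem_ddfObjectiveSet hK hL hLM hr0.le (by nlinarith) he) fun w hw ↦ ?_
  set q := (1 - ((K : ℝ) + 1) * r) / (1 - r)
  have hq0 : 0 < q := div_pos (by linarith) hr'
  have hq1 : q < 1 := (div_lt_one hr').2 (by nlinarith)
  rw [mul_div_assoc, ← lt_div_iff₀' hM0] at hw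
  obtain ⟨α₂, hqα, hα₂⟩ := exists_between (lt_min hq1 hw)
  have hout : (1 - α₂) * (1 - r) < K * r := by
    have := (div_lt_iff₀ hr').1 hqα
    linarith
  exact ⟨_, mul_mem_ddfObjectiveSet hL (hq0.trans hqα).le (hα₂.trans_le (min_le_left _ _)).le hout,
    (lt_div_iff₀' hM0).1 (hα₂.trans_le (min_le_right _ _))⟩

end ddfObjectiveSet

/-- Theorem 2, matching of the dynamic DF lower bound with the converse
for `M ≥ 2K`: for `0 < r < 1/(K+1)`,
`d_DDF(r) = min_{1 ≤ L ≤ 2K} d^L(r) = M(1-(K+1)r)/(1-r)`, where `d^L(r)` is the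
infimum of `Σ_{j=1}^{L} (2j-1+M-L) α_{1,j} + M α₂` over ordered nonnegative
`α_{1,1} ≥ … ≥ α_{1,L} ≥ 0`, `α₂ ≥ 0` in the outage region
`S₁S₂ < r(K S₁ + L S₂)` with `S₁ = Σ_j (1-α_{1,j})⁺`, `S₂ = (1-α₂)⁺`. -/
theorem stmt8 (K M : ℕ) (hK : 1 ≤ K) (hM : 2 * K ≤ M) (r : ℝ)
    (hr0 : 0 < r) (hr1 : r < 1 / ((K : ℝ) + 1)) :
    sInf {d : ℝ | ∃ L : ℕ, 1 ≤ L ∧ L ≤ 2 * K ∧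
        d = sInf {e : ℝ | ∃ (α₁ : Fin L → ℝ) (α₂ : ℝ),
            (∀ i j : Fin L, i ≤ j → α₁ j ≤ α₁ i) ∧ (∀ j, 0 ≤ α₁ j) ∧ 0 ≤ α₂ ∧
            (∑ j, max (1 - α₁ j) 0) * max (1 - α₂) 0
              < r * ((K : ℝ) * (∑ j, max (1 - α₁ j) 0)
                  + (L : ℝ) * max (1 - α₂) 0) ∧
            e = (∑ j : Fin L, (2 * ((j : ℕ) : ℝ) + 1 + (M : ℝ) - (L : ℝ)) * α₁ j)
                  + (M : ℝ) * α₂}}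
      = (M : ℝ) * (1 - ((K : ℝ) + 1) * r) / (1 - r) := by
  have hr1' : r * (K + 1) < 1 := by
    rwa [lt_div_iff₀ (by positivity)] at hr1
  have hL_ddf : ∀ L, 1 ≤ L → L ≤ 2 * K →
      sInf (ddfObjectiveSet K M L r) = (M : ℝ) * (1 - ((K : ℝ) + 1) * r) / (1 - r) :=
    fun L hL hL2 ↦ csInf_ddfObjectiveSet hK hL (hL2.trans hM) hr0 hr1'
  have hsingleton : {d : ℝ | ∃ L : ℕ, 1 ≤ L ∧ L ≤ 2 * K ∧ d = sInf (ddfObjectiveSet K M L r)}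
      = {(M : ℝ) * (1 - ((K : ℝ) + 1) * r) / (1 - r)} := by
    ext d
    constructor
    · rintro ⟨L, hL, hL2, rfl⟩
      exact hL_ddf L hL hL2
    · rintro rfl
      exact ⟨1, le_rfl, by omega, (hL_ddf 1 le_rfl (by omega)).symm⟩
  exact hsingleton ▸ csInf_singleton _
end
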